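/- arXiv:1605.04560 — 2 statements merged into one kernel-verified Lean document; each statement's English description precedes it below -/
import Mathlib

section
/- Let U be an open subset of ℝ², χ : U → ℝ² a continuously differentiable vector field with ‖χ(y)‖ = 1 for all y ∈ U, and x : [0, σ] → U a differentiable curve with x'(s) = χ(x(s)) for all s. For each s let T(s) be the linear map of ℝ² whose matrix has columns χ(x(s)) and R χ(x(s)), and let A(s) := Dχ(x(s)). Then T(s)ᵀ A(s) T(s) − T(s)ᵀ T'(s) equals the upper-triangular matrix [[0, κ(s)], [0, a(s)]], where κ(s) := ⟨R χ(x(s)), (Dχ(x(s))) χ(x(s))⟩ is the curvature scalar and a(s) := tr(Dχ(x(s))) = ∇·χ(x(s)) is the divergence of χ along the curve. -/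
open Matrix
open scoped RealInnerProductSpace

attribute [local instance] Matrix.normedAddCommGroup Matrix.normedSpace

/-- Rotation of the Euclidean plane by `π/2`: `R(a, b) = (−b, a)`. -/
noncomputable def rot : EuclideanSpace ℝ (Fin 2) →ₗ[ℝ] EuclideanSpace ℝ (Fin 2) where
  toFun v := WithLp.toLp 2 ![-(v 1), v 0]
  map_add' x y := by ext i; fin_cases i <;> simp [PiLp.add_apply] <;> ring
  map_smul' c x := by ext i; fin_cases i <;> simp [PiLp.smul_apply] <;> ring

/-!
Since `‖χ‖ ≡ 1` on the open set `U`, differentiating `‖χ‖²` shows that `Dχ` takes values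
orthogonal to `χ`, i.e. `χᵀ A = 0`. The frame `T = [χ | Rχ]` depends linearly on `χ`, so along
the curve `T' = [Aχ | R(Aχ)]`. The identity is then a `2 × 2` computation in the entries of `χ`
and `A`, using `χ₀² + χ₁² = 1` and `χᵀ A = 0`.
-/

open Filter Topology

theorem inner_fderiv_eq_zero_of_eventually_norm_eq {E F : Type*} [NormedAddCommGroup E]
    [NormedSpace ℝ E] [NormedAddCommGroup F] [InnerProductSpace ℝ F] {χ : E → F} {p : E} {c : ℝ}
    (hχ : DifferentiableAt ℝ χ p) (hc : ∀ᶠ y in 𝓝 p, ‖χ y‖ = c) (v : E) :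
    ⟪χ p, fderiv ℝ χ p v⟫ = 0 := by
  have hconst : HasFDerivAt (‖χ ·‖ ^ 2) (0 : E →L[ℝ] ℝ) p :=
    (hasFDerivAt_const (c ^ 2) p).congr_of_eventuallyEq (hc.mono fun y hy => by simp [hy])
  simpa using congrArg (· v) (hχ.hasFDerivAt.norm_sq.unique hconst)

noncomputable def planeFrame : EuclideanSpace ℝ (Fin 2) →ₗ[ℝ] Matrix (Fin 2) (Fin 2) ℝ where
  toFun v := Matrix.of fun i j => if j = 0 then v i else rot v i
  map_add' u v := by ext i j; fin_cases j <;> simp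
  map_smul' c v := by ext i j; fin_cases j <;> simp

theorem HasDerivAt.planeFrame {c : ℝ → EuclideanSpace ℝ (Fin 2)} {c' : EuclideanSpace ℝ (Fin 2)}
    {t : ℝ} (hc : HasDerivAt c c' t) :
    HasDerivAt (fun t => planeFrame (c t)) (planeFrame c') t :=
  (LinearMap.toContinuousLinearMap _root_.planeFrame).hasFDerivAt.comp_hasDerivAt t hc

theorem EuclideanSpace.linearMap_apply_eq_toMatrix_mulVec {𝕜 ι κ : Type*} [RCLike 𝕜]
    [Fintype ι] [DecidableEq ι] [Fintype κ]
    (f : EuclideanSpace 𝕜 ι →ₗ[𝕜] EuclideanSpace 𝕜 κ) (v : EuclideanSpace 𝕜 ι) (i : κ) :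
    f v i = (LinearMap.toMatrix (basisFun ι 𝕜).toBasis (basisFun κ 𝕜).toBasis f *ᵥ v.ofLp) i :=
  (congrFun (LinearMap.toMatrix_mulVec_repr (basisFun ι 𝕜).toBasis (basisFun κ 𝕜).toBasis f v)
    i).symm

open EuclideanSpace in
theorem planeFrame_transpose_mul_sub (f : EuclideanSpace ℝ (Fin 2) →ₗ[ℝ] EuclideanSpace ℝ (Fin 2))
    (u : EuclideanSpace ℝ (Fin 2)) (hu : ‖u‖ = 1) (horth : ∀ v, ⟪u, f v⟫ = 0) :
    (planeFrame u)ᵀ * LinearMap.toMatrix (basisFun (Fin 2) ℝ).toBasis (basisFun (Fin 2) ℝ).toBasis f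
          * planeFrame u
        - (planeFrame u)ᵀ * planeFrame (f u) =
      !![0, ⟪rot u, f u⟫;
        0, Matrix.trace
          (LinearMap.toMatrix (basisFun (Fin 2) ℝ).toBasis (basisFun (Fin 2) ℝ).toBasis f)] := by
  have hf := linearMap_apply_eq_toMatrix_mulVec f
  set M := LinearMap.toMatrix (basisFun (Fin 2) ℝ).toBasis (basisFun (Fin 2) ℝ).toBasis f
  have hunit : u 0 ^ 2 + u 1 ^ 2 = 1 := by
    have h := real_inner_self_eq_norm_mul_norm u
    simp only [hu, PiLp.inner_apply, Fin.sum_univ_two] at h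
    simpa using h
  have horth₀ : M 0 0 * u 0 + M 1 0 * u 1 = 0 := by
    simpa [hf, PiLp.inner_apply, Fin.sum_univ_two, mulVec, dotProduct] using horth (single 0 1)
  have horth₁ : M 0 1 * u 0 + M 1 1 * u 1 = 0 := by
    simpa [hf, PiLp.inner_apply, Fin.sum_univ_two, mulVec, dotProduct] using horth (single 1 1)
  ext i j
  fin_cases i <;> fin_cases j <;>
    simp only [planeFrame, rot, LinearMap.coe_mk, AddHom.coe_mk, hf, mulVec, dotProduct,
      Fin.sum_univ_two, Fin.isValue, Fin.zero_eta, Fin.mk_one, Matrix.sub_apply, Matrix.mul_apply,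
      transpose_apply, of_apply, one_ne_zero, ↓reduceIte, cons_val_zero, cons_val_one,
      cons_val_fin_one, cons_val', neg_add_rev, neg_mul, mul_neg, PiLp.inner_apply,
      RCLike.inner_apply, Real.ringHom_apply, trace_fin_two]
  · ring
  · linear_combination u 0 * horth₁ - u 1 * horth₀
  · ring
  · linear_combination (M 0 0 + M 1 1) * hunit - 2 * u 0 * horth₀ - 2 * u 1 * horth₁

theorem moving_frame_coefficient_matrix_general
    (σ : ℝ)
    (U : Set (EuclideanSpace ℝ (Fin 2))) (hU : IsOpen U)
    (χ : EuclideanSpace ℝ (Fin 2) → EuclideanSpace ℝ (Fin 2))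
    (hχ : ContDiffOn ℝ 1 χ U)
    (hnorm : ∀ y ∈ U, ‖χ y‖ = 1)
    (x : ℝ → EuclideanSpace ℝ (Fin 2))
    (hxU : ∀ s ∈ Set.Icc (0 : ℝ) σ, x s ∈ U)
    (hx : ∀ s ∈ Set.Icc (0 : ℝ) σ, HasDerivAt x (χ (x s)) s)
    (T T' : ℝ → Matrix (Fin 2) (Fin 2) ℝ)
    (hTdef : ∀ s, T s = Matrix.of fun i j => if j = 0 then χ (x s) i else rot (χ (x s)) i)
    (hT : ∀ s ∈ Set.Icc (0 : ℝ) σ, HasDerivAt T (T' s) s)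
    (A : ℝ → Matrix (Fin 2) (Fin 2) ℝ)
    (hA : ∀ s, A s = LinearMap.toMatrix
      (EuclideanSpace.basisFun (Fin 2) ℝ).toBasis (EuclideanSpace.basisFun (Fin 2) ℝ).toBasis
      (fderiv ℝ χ (x s) : EuclideanSpace ℝ (Fin 2) →ₗ[ℝ] EuclideanSpace ℝ (Fin 2))) :
    ∀ s ∈ Set.Icc (0 : ℝ) σ,
      (T s)ᵀ * A s * T s - (T s)ᵀ * T' s =
        !![0, ⟪rot (χ (x s)), fderiv ℝ χ (x s) (χ (x s))⟫; 0, (A s).trace] := by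
  intro s hs
  have hUx : U ∈ 𝓝 (x s) := hU.mem_nhds (hxU s hs)
  have hχx : DifferentiableAt ℝ χ (x s) := (hχ.differentiableOn one_ne_zero).differentiableAt hUx
  have hframe : T = fun t => planeFrame (χ (x t)) := funext hTdef
  have hT' : T' s = planeFrame (fderiv ℝ χ (x s) (χ (x s))) :=
    (hT s hs).unique (hframe ▸ (hχx.hasFDerivAt.comp_hasDerivAt s (hx s hs)).planeFrame)
  rw [hTdef s, hT', hA s]
  exact planeFrame_transpose_mul_sub _ _ (hnorm _ (hxU s hs))
    (inner_fderiv_eq_zero_of_eventually_norm_eq hχx (eventually_of_mem hUx hnorm))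

/-- Let `U ⊆ ℝ²` be open, `χ : U → ℝ²` a continuously differentiable
vector field with `‖χ(y)‖ = 1` for all `y ∈ U`, and `x : [0, σ] → U` a differentiable
curve with `x'(s) = χ(x(s))` for all `s`.  For each `s` let `T(s)` be the linear map of
`ℝ²` whose matrix has columns `χ(x(s))` and `R χ(x(s))`, and let `A(s) := Dχ(x(s))`.
Then `T(s)ᵀ A(s) T(s) − T(s)ᵀ T'(s)` equals the upper-triangular matrix
`[[0, κ(s)], [0, a(s)]]`, where `κ(s) := ⟨R χ(x(s)), (Dχ(x(s))) χ(x(s))⟩` is the curvature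
scalar and `a(s) := tr(Dχ(x(s))) = ∇·χ(x(s))` is the divergence of `χ` along the curve. -/
theorem moving_frame_coefficient_matrix
    (σ : ℝ) (hσ : 0 < σ)
    (U : Set (EuclideanSpace ℝ (Fin 2))) (hU : IsOpen U)
    (χ : EuclideanSpace ℝ (Fin 2) → EuclideanSpace ℝ (Fin 2))
    (hχ : ContDiffOn ℝ 1 χ U)
    (hnorm : ∀ y ∈ U, ‖χ y‖ = 1)
    (x : ℝ → EuclideanSpace ℝ (Fin 2))
    (hxU : ∀ s ∈ Set.Icc (0 : ℝ) σ, x s ∈ U)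
    (hx : ∀ s ∈ Set.Icc (0 : ℝ) σ, HasDerivAt x (χ (x s)) s)
    (T T' : ℝ → Matrix (Fin 2) (Fin 2) ℝ)
    (hTdef : ∀ s, T s = Matrix.of fun i j => if j = 0 then χ (x s) i else rot (χ (x s)) i)
    (hT : ∀ s ∈ Set.Icc (0 : ℝ) σ, HasDerivAt T (T' s) s)
    (A : ℝ → Matrix (Fin 2) (Fin 2) ℝ)
    (hA : ∀ s, A s = LinearMap.toMatrix
      (EuclideanSpace.basisFun (Fin 2) ℝ).toBasis (EuclideanSpace.basisFun (Fin 2) ℝ).toBasis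
      (fderiv ℝ χ (x s) : EuclideanSpace ℝ (Fin 2) →ₗ[ℝ] EuclideanSpace ℝ (Fin 2))) :
    ∀ s ∈ Set.Icc (0 : ℝ) σ,
      (T s)ᵀ * A s * T s - (T s)ᵀ * T' s =
        !![0, ⟪rot (χ (x s)), fderiv ℝ χ (x s) (χ (x s))⟫; 0, (A s).trace] :=
  moving_frame_coefficient_matrix_general σ U hU χ hχ hnorm x hxU hx T T' hTdef hT A hA
end

section
/- Let Q : ℝ → (2×2 real matrices) and b : ℝ → ℝ² be differentiable, with Q(t) orthogonal for every t. Let x̃₁, x̃₂ : ℝ → ℝ² be differentiable curves with x̃₁(t₀) = x̃₂(t₀) at some time t₀, and define xᵢ(t) := Q(t) x̃ᵢ(t) + b(t) for i = 1, 2. Then for every vector Δ ∈ ℝ², ⟨x₁'(t₀) − x₂'(t₀), Q(t₀)Δ⟩ = ⟨x̃₁'(t₀) − x̃₂'(t₀), Δ⟩. In other words, the pointwise material flux density φ = ⟨v₁ − v₂, Δx⟩, formed from the difference of two velocities at a common base point paired with a distance vector, is invariant under all Euclidean frame changes x = Q(t)x̃ + b(t). -/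
open Matrix

attribute [local instance] Matrix.normedAddCommGroup Matrix.normedSpace

/-! Differentiating `Q x̃ + b` by the product rule, the frame terms `Q' x̃ + b'` agree for two
curves through a common point, so their relative velocity transforms as `Q (x̃₁' - x̃₂')`;
an orthogonal `Q` then preserves its dot product with `Q Δ`. -/

section FrameChange

variable {m n : Type*} [Fintype n]

theorem HasDerivAt.mulVec {Q : ℝ → Matrix m n ℝ} {Q' : Matrix m n ℝ} {x : ℝ → n → ℝ}
    {x' : n → ℝ} {t : ℝ} (hQ : HasDerivAt Q Q' t) (hx : HasDerivAt x x' t) :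
    HasDerivAt (fun s => Q s *ᵥ x s) (Q' *ᵥ x t + Q t *ᵥ x') t := by
  refine hasDerivAt_pi.mpr fun i => ?_
  have hQi : ∀ j, HasDerivAt (fun s => Q s i j) (Q' i j) t := fun j =>
    hasDerivAt_pi.mp (hasDerivAt_pi.mp hQ i) j
  have hxj : ∀ j, HasDerivAt (fun s => x s j) (x' j) t := fun j => hasDerivAt_pi.mp hx j
  show HasDerivAt (fun s => ∑ j, Q s i j * x s j)
    (∑ j, Q' i j * x t j + ∑ j, Q t i j * x' j) t
  rw [← Finset.sum_add_distrib]
  exact HasDerivAt.fun_sum fun j _ => (hQi j).mul (hxj j)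

theorem HasDerivAt.frameChange_sub [Fintype m] {Q : ℝ → Matrix m n ℝ} {Q' : Matrix m n ℝ}
    {b : ℝ → m → ℝ} {b' : m → ℝ} {xt₁ xt₂ : ℝ → n → ℝ} {xt₁' xt₂' : n → ℝ} {t : ℝ}
    (hQ : HasDerivAt Q Q' t) (hb : HasDerivAt b b' t)
    (hx₁ : HasDerivAt xt₁ xt₁' t) (hx₂ : HasDerivAt xt₂ xt₂' t) (hbase : xt₁ t = xt₂ t) :
    HasDerivAt (fun s => (Q s *ᵥ xt₁ s + b s) - (Q s *ᵥ xt₂ s + b s))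
      (Q t *ᵥ (xt₁' - xt₂')) t := by
  refine (((hQ.mulVec hx₁).add hb).sub ((hQ.mulVec hx₂).add hb)).congr_deriv ?_
  rw [hbase, mulVec_sub]
  abel

end FrameChange

theorem Matrix.dotProduct_mulVec_mulVec_of_transpose_mul_self {m n : Type*} [Fintype m]
    [Fintype n] [DecidableEq n] {Q : Matrix m n ℝ} (hQ : Qᵀ * Q = 1) (u w : n → ℝ) :
    (Q *ᵥ u) ⬝ᵥ (Q *ᵥ w) = u ⬝ᵥ w := by
  rw [dotProduct_mulVec, ← mulVec_transpose, mulVec_mulVec, hQ, one_mulVec]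

/-- Let `Q : ℝ → (2×2 real matrices)` and `b : ℝ → ℝ²` be differentiable,
with `Q(t)` orthogonal for every `t`.  Let `x̃₁, x̃₂ : ℝ → ℝ²` be differentiable curves with
`x̃₁(t₀) = x̃₂(t₀)` at some time `t₀`, and define `xᵢ(t) := Q(t) x̃ᵢ(t) + b(t)` for
`i = 1, 2`.  Then for every vector `Δ ∈ ℝ²`,
`⟨x₁'(t₀) − x₂'(t₀), Q(t₀)Δ⟩ = ⟨x̃₁'(t₀) − x̃₂'(t₀), Δ⟩`: the pointwise material flux
density is invariant under all Euclidean frame changes `x = Q(t)x̃ + b(t)`. -/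
theorem flux_density_objectivity
    (Q Q' : ℝ → Matrix (Fin 2) (Fin 2) ℝ) (b b' : ℝ → Fin 2 → ℝ)
    (hQ : ∀ t, HasDerivAt Q (Q' t) t)
    (hb : ∀ t, HasDerivAt b (b' t) t)
    (horth : ∀ t, (Q t)ᵀ * Q t = 1)
    (xt₁ xt₂ xt₁' xt₂' : ℝ → Fin 2 → ℝ)
    (hx₁ : ∀ t, HasDerivAt xt₁ (xt₁' t) t)
    (hx₂ : ∀ t, HasDerivAt xt₂ (xt₂' t) t)
    (t₀ : ℝ) (hbase : xt₁ t₀ = xt₂ t₀)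
    (x₁ x₂ : ℝ → Fin 2 → ℝ)
    (hx₁def : ∀ t, x₁ t = (Q t).mulVec (xt₁ t) + b t)
    (hx₂def : ∀ t, x₂ t = (Q t).mulVec (xt₂ t) + b t)
    (v₁ v₂ : Fin 2 → ℝ)
    (hv₁ : HasDerivAt x₁ v₁ t₀) (hv₂ : HasDerivAt x₂ v₂ t₀) :
    ∀ Δ : Fin 2 → ℝ, (v₁ - v₂) ⬝ᵥ ((Q t₀).mulVec Δ) = (xt₁' t₀ - xt₂' t₀) ⬝ᵥ Δ := by
  intro Δ
  have hrel : v₁ - v₂ = Q t₀ *ᵥ (xt₁' t₀ - xt₂' t₀) := by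
    have h := (hQ t₀).frameChange_sub (hb t₀) (hx₁ t₀) (hx₂ t₀) hbase
    simp only [← hx₁def, ← hx₂def] at h
    exact (hv₁.sub hv₂).unique h
  rw [hrel, dotProduct_mulVec_mulVec_of_transpose_mul_self (horth t₀)]
end
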